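/- In any mixed Nash equilibrium of the routing game (p₁>α, p₂>1, Assumption 1), for every minimum s–t cut E({S,T}) and every edge (i,j)∈E({S,T}), there exists a flow x in the support of the defender's equilibrium strategy with x_{ij}>0. -/

import Mathlib

/-!
Suppose no flow in the support of `σ₁` uses the min-cut edge `e`, and write `V = E_{σ₁}[F]`.
Attacking `K \ {e}`, at cost `C₂(K) - c_e = Θ - c_e`, then still destroys all flow, so
`U₂ ≥ p₂ V - Θ + c_e`. On the other hand `p₂ u₁ + p₁ u₂ = p₂ u₁(·, ∅) - p₁ C₂` makes the game
strategically zero-sum, and the defender can secure `(p₁ - α) Θ - p₁ E_{σ₂}[C₂]` by routing the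
Assumption-1 flow scaled by `1/p₂`; with `C₁ ≥ α F` this gives `p₁ U₂ ≤ (p₁ - α)(p₂ V - Θ)`.
Since `U₂ ≥ 0` (attack nothing), `p₂ V ≥ Θ`, and the two bounds on `U₂` force `p₁ c_e ≤ 0`.
-/

open scoped BigOperators Classical

/-- A capacitated network given by its finite edge set, capacities, per-unit
transportation costs, and the (edge sets of its) `s`-`t` paths and loops. -/
structure Network where
  E : Type
  fin : Fintype E
  dec : DecidableEq E
  /-- edge capacities -/
  c : E → ℝ
  /-- per-unit transportation costs -/
  b : E → ℝ
  /-- the `s`-`t` paths, identified with their edge sets -/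
  P : Finset (Finset E)
  /-- the loops, identified with their edge sets -/
  L : Finset (Finset E)
  c_nonneg : ∀ e, 0 ≤ c e
  b_nonneg : ∀ e, 0 ≤ b e
  P_nonempty : P.Nonempty
  P_edges_nonempty : ∀ p ∈ P, p.Nonempty

attribute [instance] Network.fin Network.dec

namespace Network

variable (N : Network)

/-- All paths and loops. -/
noncomputable def Lam : Finset (Finset N.E) := N.P ∪ N.L

/-- The flow through edge `e` induced by the path/loop flow `y`. -/
noncomputable def edgeFlow (y : Finset N.E → ℝ) (e : N.E) : ℝ :=
  ∑ l ∈ N.Lam.filter (fun l => e ∈ l), y l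

/-- Feasibility of a path/loop flow: nonnegative, supported on paths and loops,
and respecting edge capacities. -/
def Feasible (y : Finset N.E → ℝ) : Prop :=
  (∀ l, 0 ≤ y l) ∧ (∀ l, l ∉ N.Lam → y l = 0) ∧ (∀ e, N.edgeFlow y e ≤ N.c e)

/-- The value `F(x)` of the initial flow: total flow on `s`-`t` paths. -/
noncomputable def val (y : Finset N.E → ℝ) : ℝ := ∑ p ∈ N.P, y p

/-- The value `F(x^μ)` of the effective flow after the attack `μ`:
only the flow on paths avoiding all disrupted edges survives. -/
noncomputable def effVal (y : Finset N.E → ℝ) (μ : Finset N.E) : ℝ :=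
  ∑ p ∈ N.P.filter (fun p => Disjoint p μ), y p

/-- Transportation cost `C₁(x) = Σ b_e x_e`. -/
noncomputable def C1 (y : Finset N.E → ℝ) : ℝ := ∑ e, N.b e * N.edgeFlow y e

/-- Cost of an attack, `C₂(μ) = Σ_{e ∈ μ} c_e`. -/
noncomputable def C2 (μ : Finset N.E) : ℝ := ∑ e ∈ μ, N.c e

/-- Transportation cost of a path. -/
noncomputable def pathCost (p : Finset N.E) : ℝ := ∑ e ∈ p, N.b e

/-- `α`: the minimum transportation cost over all `s`-`t` paths. -/
noncomputable def alpha : ℝ := sInf (N.pathCost '' ↑N.P)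

/-- A cut: a set of edges meeting every `s`-`t` path. -/
def IsCut (K : Finset N.E) : Prop := ∀ p ∈ N.P, ¬ Disjoint p K

/-- A minimum cut: a cut of minimum capacity. -/
def IsMinCut (K : Finset N.E) : Prop := N.IsCut K ∧ ∀ K', N.IsCut K' → N.C2 K ≤ N.C2 K'

/-- `Θ`: the maximum flow value. -/
noncomputable def Theta : ℝ := sSup (N.val '' {y | N.Feasible y})

/-- A maximum flow. -/
def IsMaxFlow (y : Finset N.E → ℝ) : Prop :=
  N.Feasible y ∧ ∀ z, N.Feasible z → N.val z ≤ N.val y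

/-- A maximum flow with minimum transportation cost (an element of `Ω`). -/
def IsMFMC (y : Finset N.E → ℝ) : Prop :=
  N.IsMaxFlow y ∧ ∀ z, N.IsMaxFlow z → N.C1 y ≤ N.C1 z

/-- Assumption 1: `x` is a max-flow with minimum transportation cost all of whose
positively used `s`-`t` paths have transportation cost exactly `α`. -/
def Assumption1 (x : Finset N.E → ℝ) : Prop :=
  N.IsMFMC x ∧ ∀ p ∈ N.P, 0 < x p → N.pathCost p = N.alpha

/-- Defender's payoff `u₁(x,μ) = p₁ F(x^μ) - C₁(x)`. -/
noncomputable def u1 (p1 : ℝ) (y : Finset N.E → ℝ) (μ : Finset N.E) : ℝ :=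
  p1 * N.effVal y μ - N.C1 y

/-- Attacker's payoff `u₂(x,μ) = p₂ F(x - x^μ) - C₂(μ)`. -/
noncomputable def u2 (p2 : ℝ) (y : Finset N.E → ℝ) (μ : Finset N.E) : ℝ :=
  p2 * (N.val y - N.effVal y μ) - N.C2 μ

/-- The defender's action set: feasible flows. -/
def Flow : Type := {y : Finset N.E → ℝ // N.Feasible y}

/-- A (finitely supported) mixed strategy of the defender. -/
def MixedF (σ : N.Flow →₀ ℝ) : Prop := (∀ y, 0 ≤ σ y) ∧ (σ.sum fun _ w => w) = 1

/-- A mixed strategy of the attacker. -/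
def MixedA (σ : Finset N.E → ℝ) : Prop := (∀ μ, 0 ≤ σ μ) ∧ ∑ μ, σ μ = 1

/-- Expectation of a function of the flow under the defender's mixed strategy. -/
noncomputable def expF (σ : N.Flow →₀ ℝ) (g : (Finset N.E → ℝ) → ℝ) : ℝ :=
  σ.sum fun y w => w * g y.1

/-- Expectation of a function of the attack under the attacker's mixed strategy. -/
noncomputable def expA (σ : Finset N.E → ℝ) (h : Finset N.E → ℝ) : ℝ :=
  ∑ μ, σ μ * h μ

/-- Expectation of a function of both actions under a mixed strategy profile. -/
noncomputable def expFA (σ1 : N.Flow →₀ ℝ) (σ2 : Finset N.E → ℝ)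
    (g : (Finset N.E → ℝ) → Finset N.E → ℝ) : ℝ :=
  σ1.sum fun y w => w * ∑ μ, σ2 μ * g y.1 μ

/-- Defender's expected payoff. -/
noncomputable def U1 (p1 : ℝ) (σ1 : N.Flow →₀ ℝ) (σ2 : Finset N.E → ℝ) : ℝ :=
  N.expFA σ1 σ2 (N.u1 p1)

/-- Attacker's expected payoff. -/
noncomputable def U2 (p2 : ℝ) (σ1 : N.Flow →₀ ℝ) (σ2 : Finset N.E → ℝ) : ℝ :=
  N.expFA σ1 σ2 (N.u2 p2)

/-- Mixed Nash equilibrium. -/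
def IsNE (p1 p2 : ℝ) (σ1 : N.Flow →₀ ℝ) (σ2 : Finset N.E → ℝ) : Prop :=
  N.MixedF σ1 ∧ N.MixedA σ2 ∧
  (∀ τ1, N.MixedF τ1 → N.U1 p1 τ1 σ2 ≤ N.U1 p1 σ1 σ2) ∧
  (∀ τ2, N.MixedA τ2 → N.U2 p2 σ1 τ2 ≤ N.U2 p2 σ1 σ2)

/-- Pure Nash equilibrium. -/
def IsPureNE (p1 p2 : ℝ) (x : Finset N.E → ℝ) (μ : Finset N.E) : Prop :=
  N.Feasible x ∧
  (∀ y, N.Feasible y → N.u1 p1 y μ ≤ N.u1 p1 x μ) ∧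
  (∀ ν, N.u2 p2 x ν ≤ N.u2 p2 x μ)

end Network

theorem Finset.sum_filter_not_disjoint_le {α β : Type*} [DecidableEq α] [AddCommMonoid β]
    [PartialOrder β] [IsOrderedAddMonoid β] (S : Finset (Finset α)) (μ : Finset α)
    {w : Finset α → β} (hw : ∀ p ∈ S, 0 ≤ w p) :
    ∑ p ∈ S with ¬ Disjoint p μ, w p ≤ ∑ a ∈ μ, ∑ p ∈ S with a ∈ p, w p := by
  rw [Finset.sum_comm' (t' := S) (s' := fun p => μ.filter (· ∈ p)) (by aesop)]
  calc ∑ p ∈ S with ¬ Disjoint p μ, w p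
      ≤ ∑ p ∈ S with ¬ Disjoint p μ, ∑ a ∈ μ with a ∈ p, w p := by
        refine Finset.sum_le_sum fun p hp => ?_
        obtain ⟨hpS, hpμ⟩ := Finset.mem_filter.mp hp
        have hcard : 1 ≤ (μ.filter (· ∈ p)).card := Finset.card_pos.mpr <| by
          obtain ⟨a, hap, haμ⟩ := Finset.not_disjoint_iff.mp hpμ
          exact ⟨a, Finset.mem_filter.mpr ⟨haμ, hap⟩⟩
        simpa using nsmul_le_nsmul_left (hw p hpS) hcard
    _ ≤ ∑ p ∈ S, ∑ a ∈ μ with a ∈ p, w p :=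
        Finset.sum_le_sum_of_subset_of_nonneg (Finset.filter_subset _ _)
          fun p hp _ => Finset.sum_nonneg fun _ _ => hw p hp

namespace Network

variable {N : Network}

lemma pathCost_nonneg (l : Finset N.E) : 0 ≤ N.pathCost l :=
  Finset.sum_nonneg fun e _ => N.b_nonneg e

lemma alpha_le_pathCost {p : Finset N.E} (hp : p ∈ N.P) : N.alpha ≤ N.pathCost p :=
  csInf_le (N.P.finite_toSet.image N.pathCost).bddBelow ⟨p, hp, rfl⟩

lemma alpha_nonneg : 0 ≤ N.alpha := by
  obtain ⟨p, hp⟩ := N.P_nonempty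
  exact le_csInf ⟨_, p, hp, rfl⟩ fun _ ⟨q, _, hq⟩ => hq ▸ pathCost_nonneg q

lemma P_subset_Lam : N.P ⊆ N.Lam :=
  Finset.subset_union_left

lemma edgeFlow_nonneg {y : Finset N.E → ℝ} (hy : N.Feasible y) (e : N.E) :
    0 ≤ N.edgeFlow y e :=
  Finset.sum_nonneg fun l _ => hy.1 l

lemma edgeFlow_mono {y z : Finset N.E → ℝ} (hyz : y ≤ z) (e : N.E) :
    N.edgeFlow y e ≤ N.edgeFlow z e :=
  Finset.sum_le_sum fun l _ => hyz l

lemma C1_eq_sum_mul_pathCost (y : Finset N.E → ℝ) :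
    N.C1 y = ∑ l ∈ N.Lam, y l * N.pathCost l := by
  simp only [C1, edgeFlow, pathCost, Finset.mul_sum]
  rw [Finset.sum_comm' (t' := N.Lam) (s' := id) (by simp; tauto)]
  simp [mul_comm]

lemma alpha_mul_val_le_C1 {y : Finset N.E → ℝ} (hy : N.Feasible y) :
    N.alpha * N.val y ≤ N.C1 y := by
  rw [C1_eq_sum_mul_pathCost, val, Finset.mul_sum]
  calc ∑ p ∈ N.P, N.alpha * y p ≤ ∑ p ∈ N.P, y p * N.pathCost p :=
        Finset.sum_le_sum fun p hp => by
          rw [mul_comm]; exact mul_le_mul_of_nonneg_left (alpha_le_pathCost hp) (hy.1 p)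
    _ ≤ ∑ l ∈ N.Lam, y l * N.pathCost l :=
        Finset.sum_le_sum_of_subset_of_nonneg P_subset_Lam
          fun l _ _ => mul_nonneg (hy.1 l) (pathCost_nonneg l)

lemma val_sub_effVal_le_C2 {y : Finset N.E → ℝ} (hy : N.Feasible y) (μ : Finset N.E) :
    N.val y - N.effVal y μ ≤ N.C2 μ := by
  have hlost : N.val y - N.effVal y μ = ∑ p ∈ N.P with ¬ Disjoint p μ, y p := by
    rw [val, effVal, ← Finset.sum_filter_add_sum_filter_not N.P (fun p => Disjoint p μ)]
    ring
  calc N.val y - N.effVal y μ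
      ≤ ∑ e ∈ μ, ∑ p ∈ N.P with e ∈ p, y p :=
        hlost ▸ Finset.sum_filter_not_disjoint_le N.P μ fun p _ => hy.1 p
    _ ≤ ∑ e ∈ μ, N.edgeFlow y e :=
        Finset.sum_le_sum fun e _ => Finset.sum_le_sum_of_subset_of_nonneg
          (Finset.filter_subset_filter _ P_subset_Lam) fun l _ _ => hy.1 l
    _ ≤ N.C2 μ := Finset.sum_le_sum fun e _ => hy.2.2 e

lemma effVal_empty (y : Finset N.E → ℝ) : N.effVal y ∅ = N.val y := by
  simp [effVal, val]

lemma u1_empty_le {y : Finset N.E → ℝ} (hy : N.Feasible y) (p1 : ℝ) :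
    N.u1 p1 y ∅ ≤ (p1 - N.alpha) * N.val y := by
  rw [u1, effVal_empty]
  linarith [alpha_mul_val_le_C1 hy]

lemma u2_empty (p2 : ℝ) (y : Finset N.E → ℝ) : N.u2 p2 y ∅ = 0 := by
  simp [u2, effVal_empty, C2]

lemma mul_u1_add_mul_u2 (p1 p2 : ℝ) (y : Finset N.E → ℝ) (μ : Finset N.E) :
    p2 * N.u1 p1 y μ + p1 * N.u2 p2 y μ = p2 * N.u1 p1 y ∅ + -p1 * N.C2 μ := by
  simp only [u1, u2, effVal_empty]
  ring

lemma IsMinCut.C2_eq {K K' : Finset N.E} (hK : N.IsMinCut K) (hK' : N.IsMinCut K') :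
    N.C2 K = N.C2 K' :=
  le_antisymm (hK.2 K' hK'.1) (hK'.2 K hK.1)

lemma C2_erase {K : Finset N.E} {e : N.E} (he : e ∈ K) :
    N.C2 (K.erase e) = N.C2 K - N.c e :=
  Finset.sum_erase_eq_sub he

lemma effVal_erase_eq_zero {K : Finset N.E} (hK : N.IsCut K) {y : Finset N.E → ℝ}
    (hy : N.Feasible y) {e : N.E} (hye : N.edgeFlow y e ≤ 0) :
    N.effVal y (K.erase e) = 0 := by
  have hzero : ∀ l ∈ N.Lam, e ∈ l → y l = 0 := fun l hl hel =>
    (Finset.sum_eq_zero_iff_of_nonneg fun l _ => hy.1 l).mp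
      (hye.antisymm (edgeFlow_nonneg hy e)) l (Finset.mem_filter.mpr ⟨hl, hel⟩)
  refine Finset.sum_eq_zero fun p hp => ?_
  obtain ⟨hpP, hpK⟩ := Finset.mem_filter.mp hp
  obtain ⟨a, hap, haK⟩ := Finset.not_disjoint_iff.mp (hK p hpP)
  obtain rfl : a = e := by
    by_contra hae
    exact Finset.disjoint_left.mp hpK hap (Finset.mem_erase.mpr ⟨hae, haK⟩)
  exact hzero p (P_subset_Lam hpP) hap

lemma Feasible.smul {y : Finset N.E → ℝ} (hy : N.Feasible y) {r : ℝ} (hr0 : 0 ≤ r)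
    (hr1 : r ≤ 1) : N.Feasible (r • y) := by
  refine ⟨fun l => mul_nonneg hr0 (hy.1 l), fun l hl => by simp [hy.2.1 l hl], fun e => ?_⟩
  have hflow : N.edgeFlow (r • y) e = r * N.edgeFlow y e := by
    simp [edgeFlow, Finset.mul_sum]
  rw [hflow]
  nlinarith [hy.2.2 e, edgeFlow_nonneg hy e, N.c_nonneg e]

lemma u1_smul (p1 r : ℝ) (y : Finset N.E → ℝ) (μ : Finset N.E) :
    N.u1 p1 (r • y) μ = r * N.u1 p1 y μ := by
  simp only [u1, effVal, C1, edgeFlow, Pi.smul_apply, smul_eq_mul, ← Finset.mul_sum,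
    mul_left_comm _ r]
  ring

lemma val_eq_Theta {x : Finset N.E → ℝ} (hx : N.IsMaxFlow x) : N.val x = N.Theta := by
  have h : IsGreatest (N.val '' {y | N.Feasible y}) (N.val x) :=
    ⟨⟨x, hx.1, rfl⟩, by rintro _ ⟨z, hz, rfl⟩; exact hx.2 z hz⟩
  rw [Theta, h.csSup_eq]

lemma IsMaxFlow.indicator_P {x : Finset N.E → ℝ} (hx : N.IsMaxFlow x) :
    N.IsMaxFlow ((N.P : Set (Finset N.E)).indicator x) := by
  have hle : (N.P : Set (Finset N.E)).indicator x ≤ x :=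
    Set.indicator_le_self' fun l _ => hx.1.1 l
  have hval : N.val ((N.P : Set (Finset N.E)).indicator x) = N.val x :=
    Finset.sum_congr rfl fun p hp => Set.indicator_of_mem (Finset.mem_coe.mpr hp) x
  refine ⟨⟨fun l => Set.indicator_nonneg (fun l _ => hx.1.1 l) l, fun l hl => ?_,
    fun e => (edgeFlow_mono hle e).trans (hx.1.2.2 e)⟩, fun z hz => hval ▸ hx.2 z hz⟩
  exact Set.indicator_of_notMem (fun hP => hl (P_subset_Lam hP)) x

/-- Loops only add cost, so a cheapest max-flow carries no loop cost; by Assumption 1 all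
its paths cost `α`. -/
lemma Assumption1.C1_le {x : Finset N.E → ℝ} (hx : N.Assumption1 x) :
    N.C1 x ≤ N.alpha * N.Theta := by
  have hx0 : ∀ l, 0 ≤ x l := hx.1.1.1.1
  calc N.C1 x ≤ N.C1 ((N.P : Set (Finset N.E)).indicator x) :=
        hx.1.2 _ hx.1.1.indicator_P
    _ = ∑ p ∈ N.P, x p * N.pathCost p := by
        rw [C1_eq_sum_mul_pathCost, ← Finset.sum_subset P_subset_Lam
          fun l _ hl => by simp [Set.indicator_of_notMem (Finset.mem_coe.not.mpr hl)]]
        exact Finset.sum_congr rfl fun p hp => by simp [Finset.mem_coe.mpr hp]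
    _ = ∑ p ∈ N.P, N.alpha * x p := Finset.sum_congr rfl fun p hp => by
        rcases (hx0 p).lt_or_eq with h | h
        · rw [hx.2 p hp h, mul_comm]
        · simp [← h]
    _ = N.alpha * N.Theta := by rw [← Finset.mul_sum, ← val, val_eq_Theta hx.1.1]

lemma Assumption1.le_u1 {x : Finset N.E → ℝ} (hx : N.Assumption1 x) {p1 : ℝ} (hp1 : 0 ≤ p1)
    (μ : Finset N.E) : (p1 - N.alpha) * N.Theta - p1 * N.C2 μ ≤ N.u1 p1 x μ := by
  have hlost := val_sub_effVal_le_C2 hx.1.1.1 μ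
  rw [val_eq_Theta hx.1.1] at hlost
  rw [u1]
  nlinarith [hx.C1_le]

section Expectation

variable {σ1 : N.Flow →₀ ℝ} {σ2 : Finset N.E → ℝ}

lemma expFA_eq_expF_expA (g : (Finset N.E → ℝ) → Finset N.E → ℝ) :
    N.expFA σ1 σ2 g = N.expF σ1 fun y => N.expA σ2 (g y) :=
  rfl

lemma expFA_linear (a b : ℝ)
    (g h : (Finset N.E → ℝ) → Finset N.E → ℝ) :
    a * N.expFA σ1 σ2 g + b * N.expFA σ1 σ2 h =
      N.expFA σ1 σ2 fun y μ => a * g y μ + b * h y μ := by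
  simp only [expFA, Finsupp.sum, Finset.mul_sum, ← Finset.sum_add_distrib]
  exact Finset.sum_congr rfl fun _ _ => Finset.sum_congr rfl fun _ _ => by ring

lemma expA_const_mul (a : ℝ) (h : Finset N.E → ℝ) :
    N.expA σ2 (fun μ => a * h μ) = a * N.expA σ2 h := by
  simp only [expA, Finset.mul_sum, mul_left_comm]

lemma expF_mono (hσ1 : ∀ y, 0 ≤ σ1 y) {f g : (Finset N.E → ℝ) → ℝ}
    (hfg : ∀ y ∈ σ1.support, f y.1 ≤ g y.1) : N.expF σ1 f ≤ N.expF σ1 g :=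
  Finset.sum_le_sum fun y hy => mul_le_mul_of_nonneg_left (hfg y hy) (hσ1 y)

lemma expA_mono (hσ2 : ∀ μ, 0 ≤ σ2 μ) {f g : Finset N.E → ℝ}
    (hfg : ∀ μ, f μ ≤ g μ) :
    N.expA σ2 f ≤ N.expA σ2 g :=
  Finset.sum_le_sum fun μ _ => mul_le_mul_of_nonneg_left (hfg μ) (hσ2 μ)

lemma MixedF.expF_affine (hσ1 : N.MixedF σ1) (a b : ℝ) (g : (Finset N.E → ℝ) → ℝ) :
    N.expF σ1 (fun y => a + b * g y) = a + b * N.expF σ1 g := by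
  have hsum : ∑ y ∈ σ1.support, σ1 y = 1 := hσ1.2
  simp only [expF, Finsupp.sum, mul_add, Finset.sum_add_distrib, ← Finset.sum_mul, hsum,
    Finset.mul_sum, mul_left_comm _ b]
  ring

lemma MixedA.expA_affine (hσ2 : N.MixedA σ2) (a b : ℝ) (h : Finset N.E → ℝ) :
    N.expA σ2 (fun μ => a + b * h μ) = a + b * N.expA σ2 h := by
  simp only [expA, mul_add, Finset.sum_add_distrib, ← Finset.sum_mul, hσ2.2,
    Finset.mul_sum, mul_left_comm _ b]
  ring

lemma mixedF_single (y : N.Flow) : N.MixedF (Finsupp.single y 1) :=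
  ⟨fun z => by by_cases h : y = z <;> simp [h],
    Finsupp.sum_single_index rfl⟩

lemma expFA_single (y : N.Flow) (g : (Finset N.E → ℝ) → Finset N.E → ℝ) :
    N.expFA (Finsupp.single y 1) σ2 g = N.expA σ2 (g y.1) := by
  simp [expFA, expA]

lemma mixedA_pi_single (ν : Finset N.E) : N.MixedA (Pi.single ν 1) :=
  ⟨fun μ => by by_cases h : μ = ν <;> simp [h], by simp⟩

lemma expA_pi_single (ν : Finset N.E) (h : Finset N.E → ℝ) :
    N.expA (Pi.single ν 1) h = h ν := by
  simp [expA, Pi.single_apply]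

end Expectation

section Equilibrium

variable {p1 p2 : ℝ} {σ1 : N.Flow →₀ ℝ} {σ2 : Finset N.E → ℝ}

lemma IsNE.expF_u2_le_U2 (hNE : N.IsNE p1 p2 σ1 σ2) (ν : Finset N.E) :
    N.expF σ1 (fun y => N.u2 p2 y ν) ≤ N.U2 p2 σ1 σ2 := by
  simpa [U2, expFA_eq_expF_expA, expA_pi_single] using hNE.2.2.2 _ (mixedA_pi_single ν)

lemma IsNE.U2_nonneg (hNE : N.IsNE p1 p2 σ1 σ2) : 0 ≤ N.U2 p2 σ1 σ2 := by
  simpa [u2_empty, expF] using hNE.expF_u2_le_U2 ∅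

/-- The defender can secure this much by routing the Assumption-1 flow scaled by `1/p₂`. -/
lemma IsNE.le_mul_U1 (hNE : N.IsNE p1 p2 σ1 σ2) {x : Finset N.E → ℝ} (hx : N.Assumption1 x)
    (hp1 : 0 ≤ p1) (hp2 : 1 ≤ p2) :
    (p1 - N.alpha) * N.Theta - p1 * N.expA σ2 N.C2 ≤ p2 * N.U1 p1 σ1 σ2 := by
  have hp2₀ : 0 < p2 := one_pos.trans_le hp2
  let y : N.Flow :=
    ⟨p2⁻¹ • x, hx.1.1.1.smul (inv_nonneg.mpr hp2₀.le) (inv_le_one_of_one_le₀ hp2)⟩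
  have hdev : N.U1 p1 (Finsupp.single y 1) σ2 ≤ N.U1 p1 σ1 σ2 := hNE.2.2.1 _ (mixedF_single y)
  rw [U1, expFA_single] at hdev
  calc (p1 - N.alpha) * N.Theta - p1 * N.expA σ2 N.C2
      = N.expA σ2 (fun μ => (p1 - N.alpha) * N.Theta + -p1 * N.C2 μ) := by
        rw [hNE.2.1.expA_affine]; ring
    _ ≤ N.expA σ2 (N.u1 p1 x) := expA_mono hNE.2.1.1 fun μ => by linarith [hx.le_u1 hp1 μ]
    _ = p2 * N.expA σ2 (fun μ => N.u1 p1 (p2⁻¹ • x) μ) := by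
        simp only [u1_smul, expA_const_mul]; field_simp
    _ ≤ p2 * N.U1 p1 σ1 σ2 := mul_le_mul_of_nonneg_left hdev hp2₀.le

lemma MixedF.mul_U1_add_mul_U2_le (hσ1 : N.MixedF σ1) (hσ2 : N.MixedA σ2) (hp2 : 0 ≤ p2) :
    p2 * N.U1 p1 σ1 σ2 + p1 * N.U2 p2 σ1 σ2 ≤
      -p1 * N.expA σ2 N.C2 + p2 * (p1 - N.alpha) * N.expF σ1 N.val := by
  rw [U1, U2, expFA_linear]
  simp only [mul_u1_add_mul_u2]
  rw [expFA_eq_expF_expA]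
  simp only [hσ2.expA_affine]
  rw [← hσ1.expF_affine]
  refine expF_mono hσ1.1 fun y _ => ?_
  nlinarith [u1_empty_le y.2 p1]

lemma IsNE.mul_U2_le (hNE : N.IsNE p1 p2 σ1 σ2) {x : Finset N.E → ℝ} (hx : N.Assumption1 x)
    (hp1 : 0 ≤ p1) (hp2 : 1 ≤ p2) :
    p1 * N.U2 p2 σ1 σ2 ≤ (p1 - N.alpha) * (p2 * N.expF σ1 N.val - N.Theta) := by
  linarith [hNE.le_mul_U1 hx hp1 hp2,
    hNE.1.mul_U1_add_mul_U2_le (p1 := p1) hNE.2.1 (zero_le_one.trans hp2)]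

lemma IsNE.le_U2_of_edgeFlow_nonpos (hNE : N.IsNE p1 p2 σ1 σ2) {K : Finset N.E}
    (hK : N.IsCut K) {e : N.E} (he : e ∈ K)
    (hunused : ∀ y ∈ σ1.support, N.edgeFlow y.1 e ≤ 0) :
    p2 * N.expF σ1 N.val - (N.C2 K - N.c e) ≤ N.U2 p2 σ1 σ2 := by
  calc p2 * N.expF σ1 N.val - (N.C2 K - N.c e)
      = N.expF σ1 (fun y => -(N.C2 K - N.c e) + p2 * N.val y) := by
        rw [hNE.1.expF_affine]; ring
    _ ≤ N.expF σ1 (fun y => N.u2 p2 y (K.erase e)) :=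
        expF_mono hNE.1.1 fun y hy => le_of_eq <| by
          rw [u2, effVal_erase_eq_zero hK y.2 (hunused y hy), C2_erase he]; ring
    _ ≤ N.U2 p2 σ1 σ2 := hNE.expF_u2_le_U2 _

end Equilibrium

end Network

/-- in any mixed Nash equilibrium (`p₁ > α`, `p₂ > 1`, Assumption 1,
min-cut edge capacities positive), for every minimum cut `K` and every edge `e ∈ K`,
there exists a flow in the support of the defender's equilibrium strategy with positive
flow through `e`. -/
theorem min_cut_edges_used_in_equilibrium (N : Network) (p1 p2 : ℝ)
    (hp1 : N.alpha < p1) (hp2 : 1 < p2)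
    (hA1 : ∃ x, N.Assumption1 x)
    (hMFMC : ∃ K', N.IsMinCut K' ∧ N.C2 K' = N.Theta)
    (σ1 : N.Flow →₀ ℝ) (σ2 : Finset N.E → ℝ)
    (hNE : N.IsNE p1 p2 σ1 σ2)
    (K : Finset N.E) (hK : N.IsMinCut K) (hc : ∀ e ∈ K, 0 < N.c e) :
    ∀ e ∈ K, ∃ y ∈ σ1.support, 0 < N.edgeFlow y.1 e := by
  obtain ⟨x, hx⟩ := hA1
  obtain ⟨K', hK', hK'Θ⟩ := hMFMC
  have hα : 0 ≤ N.alpha := Network.alpha_nonneg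
  intro e he
  by_contra! hunused
  set V := N.expF σ1 N.val
  have hupper : p1 * N.U2 p2 σ1 σ2 ≤ (p1 - N.alpha) * (p2 * V - N.Theta) :=
    hNE.mul_U2_le hx (hα.trans hp1.le) hp2.le
  have hcut : p2 * V - (N.Theta - N.c e) ≤ N.U2 p2 σ1 σ2 := by
    simpa [hK.C2_eq hK', hK'Θ] using hNE.le_U2_of_edgeFlow_nonpos hK.1 he hunused
  have hΘ : N.Theta ≤ p2 * V := by
    nlinarith [hNE.U2_nonneg]
  nlinarith [hc e he]
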